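/- Symmetrization lemma for binary symmetric channels: let P_X be uniform on {0,1}, W a BSC with crossover w ∈ (0,1), and Q a joint type on {0,1}² with Q_X = P_X. Let Q^† be obtained from Q by swapping input labels, Q^†(x,y) = Q(1−x, 1−y), and let Q^{**} = (Q + Q^†)/2. Then D(Q^{**}_{Y|X} ∥ W | P_X) ≤ D(Q_{Y|X} ∥ W | P_X), and f_W(Q^{**}) = f_W(Q), where f_W(Q) = ∑_{x,y} Q(x,y) log W(y|x). -/
import Mathlib


open Real

/-- Midpoint convexity of `x * log x` on nonnegatives. -/
lemma midpoint_mul_log {t s : ℝ} (ht : 0 ≤ t) (hs : 0 ≤ s) :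
    ((t + s) / 2) * Real.log ((t + s) / 2) ≤ (t * Real.log t + s * Real.log s) / 2 := by
  have h := Real.convexOn_mul_log.2 (Set.mem_Ici.2 ht) (Set.mem_Ici.2 hs)
    (by norm_num : (0:ℝ) ≤ 1/2) (by norm_num : (0:ℝ) ≤ 1/2) (by norm_num)
  simp only [smul_eq_mul] at h
  calc ((t + s) / 2) * Real.log ((t + s) / 2)
      = (1/2 * t + 1/2 * s) * Real.log (1/2 * t + 1/2 * s) := by ring_nf
    _ ≤ 1/2 * (t * Real.log t) + 1/2 * (s * Real.log s) := h
    _ = (t * Real.log t + s * Real.log s) / 2 := by ring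

/-- Rewrite `u * log (2u/p)` for `u ≥ 0`, `p > 0`. -/
lemma mul_log_div {u p : ℝ} (hu : 0 ≤ u) (hp : 0 < p) :
    u * Real.log (2 * u / p) = u * Real.log u + u * (Real.log 2 - Real.log p) := by
  rcases eq_or_lt_of_le hu with h | h
  · simp [← h]
  · rw [Real.log_div (by positivity) hp.ne', Real.log_mul (by norm_num) h.ne']
    ring

/-- Pointwise convexity step. -/
lemma pointwise_step {t s p : ℝ} (ht : 0 ≤ t) (hs : 0 ≤ s) (hp : 0 < p) :
    ((t + s) / 2) * Real.log (2 * ((t + s) / 2) / p)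
      ≤ (t * Real.log (2 * t / p) + s * Real.log (2 * s / p)) / 2 := by
  rw [mul_log_div (by positivity) hp, mul_log_div ht hp, mul_log_div hs hp]
  have := midpoint_mul_log ht hs
  nlinarith [this]

/-- Symmetrization lemma for BSCs: with uniform input, swapping input/output labels and
averaging does not increase the conditional divergence to a BSC `W`, and leaves the
normalized log-likelihood `f_W` unchanged. Here `Q x y` is the joint distribution,
the conditional is `Q_{Y|X}(y|x) = 2 Q x y`, and `W x y = if y = x then 1−w else w`. -/
theorem bsc_symmetrization (w : ℝ) (hw0 : 0 < w) (hw1 : w < 1)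
    (Q : Bool → Bool → ℝ) (hQnn : ∀ x y, 0 ≤ Q x y)
    (hQmarg : ∀ x, Q x false + Q x true = 1 / 2) :
    let W : Bool → Bool → ℝ := fun x y => if y = x then 1 - w else w
    let Qs : Bool → Bool → ℝ := fun x y => (Q x y + Q (!x) (!y)) / 2
    (∑ x, ∑ y, Qs x y * Real.log ((2 * Qs x y) / W x y)
        ≤ ∑ x, ∑ y, Q x y * Real.log ((2 * Q x y) / W x y)) ∧
    (∑ x, ∑ y, Qs x y * Real.log (W x y) = ∑ x, ∑ y, Q x y * Real.log (W x y)) := by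
  intro W Qs
  have hw1' : 0 < 1 - w := by linarith
  have h1 := pointwise_step (hQnn false false) (hQnn true true) hw1'
  have h2 := pointwise_step (hQnn false true) (hQnn true false) hw0
  have h3 := pointwise_step (hQnn true false) (hQnn false true) hw0
  have h4 := pointwise_step (hQnn true true) (hQnn false false) hw1'
  constructor
  · simp only [Fintype.sum_bool, W, Qs, Bool.not_true, Bool.not_false,
      if_pos rfl, if_neg (by simp : ¬ (true = false)), if_neg (by simp : ¬ (false = true))]
    norm_num at h1 h2 h3 h4 ⊢
    linarith
  · simp only [Fintype.sum_bool, W, Qs, Bool.not_true, Bool.not_false]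
    norm_num
    ring
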